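/- Let {u_k} ⊂ ℝ^{dn} with ‖u_k‖ → ∞ and u_k/‖u_k‖ → ũ, and let ∇ be a linear forward-difference operator acting grid-edge-wise. Then for any ρ > 0 there exists k₀ such that ‖∇(u_k − ρũ)‖₀ ≤ ‖∇u_k‖₀ for all k ≥ k₀, where ‖·‖₀ is the grouped ℓ⁰ semi-norm summing over grid edges. -/

import Mathlib

/-!
If an edge `e` carries a nonzero difference of the limit direction `ũ`, then for large `k` the
normalized differences `‖u_k‖⁻¹ ∇u_k` stay near `∇ũ`, so `∇u_k e ≠ 0` as well. Hence eventually
the support of `∇ũ` lies in that of `∇u_k`, and subtracting `ρ ∇ũ` from `∇u_k` can only shrink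
the support.
-/

open Filter Topology

/-- Grouped ℓ⁰ semi-norm summing over grid edges. -/
noncomputable def l0 {m d : ℕ} (w : Fin m → Fin d → ℝ) : ℝ :=
  Set.ncard {e : Fin m | w e ≠ 0}

theorem eventually_ne_zero_of_tendsto_smul {α ι R M : Type*} [Finite ι] [Zero M]
    [SMulZeroClass R M] [TopologicalSpace M] [T1Space M] {l : Filter α} {c : α → R}
    {x : α → ι → M} {y : ι → M} (h : Tendsto (fun k => c k • x k) l (𝓝 y)) :
    ∀ᶠ k in l, ∀ i, y i ≠ 0 → x k i ≠ 0 := by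
  refine eventually_all.2 fun i => ?_
  by_cases hy : y i = 0
  · exact Eventually.of_forall fun _ hy' => absurd hy hy'
  · filter_upwards [(tendsto_pi_nhds.1 h i).eventually_ne hy] with k hk _ hx
    exact hk (by simp [hx])

theorem l0_sub_smul_le {m d : ℕ} {w v : Fin m → Fin d → ℝ} (h : ∀ e, v e ≠ 0 → w e ≠ 0)
    (c : ℝ) : l0 (w - c • v) ≤ l0 w := by
  refine Nat.cast_le.2 (Set.ncard_le_ncard (fun e (he : _ ≠ 0) (hw : w e = 0) => he ?_)
    (Set.toFinite _))
  have hv : v e = 0 := not_not.1 fun hv => h e hv hw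
  simp [hw, hv]

theorem stmt3_general {ng me d : ℕ}
    (D : (Fin ng → Fin d → ℝ) →ₗ[ℝ] (Fin me → Fin d → ℝ))
    (u : ℕ → (Fin ng → Fin d → ℝ)) (utld : Fin ng → Fin d → ℝ)
    (hdir : Tendsto (fun k => (‖u k‖)⁻¹ • u k) atTop (nhds utld))
    (ρ : ℝ) :
    ∃ k₀ : ℕ, ∀ k ≥ k₀, l0 (D (u k - ρ • utld)) ≤ l0 (D (u k)) := by
  have hDdir : Tendsto (fun k => (‖u k‖)⁻¹ • D (u k)) atTop (𝓝 (D utld)) := by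
    simpa only [Function.comp_def, map_smul] using
      ((LinearMap.continuous_of_finiteDimensional D).tendsto utld).comp hdir
  obtain ⟨k₀, hk₀⟩ := eventually_atTop.1 (eventually_ne_zero_of_tendsto_smul hDdir)
  exact ⟨k₀, fun k hk => by
    simpa only [map_sub, map_smul] using l0_sub_smul_le (hk₀ k hk) ρ⟩

theorem stmt3 {ng me d : ℕ}
    (src tgt : Fin me → Fin ng)
    (D : (Fin ng → Fin d → ℝ) →ₗ[ℝ] (Fin me → Fin d → ℝ))
    (hD : ∀ (u : Fin ng → Fin d → ℝ) (e : Fin me), D u e = u (tgt e) - u (src e))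
    (u : ℕ → (Fin ng → Fin d → ℝ)) (utld : Fin ng → Fin d → ℝ)
    (hnorm : Tendsto (fun k => ‖u k‖) atTop atTop)
    (hdir : Tendsto (fun k => (‖u k‖)⁻¹ • u k) atTop (nhds utld))
    (ρ : ℝ) (hρ : 0 < ρ) :
    ∃ k₀ : ℕ, ∀ k ≥ k₀, l0 (D (u k - ρ • utld)) ≤ l0 (D (u k)) :=
  stmt3_general D u utld hdir ρ
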